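/- arXiv:2107.06459 — 3 statements merged into one kernel-verified Lean document; each statement's English description precedes it below -/
import Mathlib

section
/- Let V be a real vector space, a : V × V → ℝ a symmetric bilinear form with a(v,v) > 0 for all v ≠ 0, with energy norm ‖v‖_a = √a(v,v), and let f : V → ℝ be linear. Let a_T : V × V → ℝ be a symmetric bilinear form and f_T : V → ℝ a linear functional (discrete counterparts obtained by numerical integration), and set J_T(v) = ½ a_T(v,v) − f_T(v). Let M ⊆ N ⊆ V be subsets such that u₁ − u₂ ∈ N whenever u₁, u₂ ∈ M, and assume there exists α > 0 such that α ‖φ‖_a² ≤ a_T(φ,φ) for all φ ∈ N. Suppose u ∈ V satisfies a(u,w) = f(w) for all w ∈ V, and u_T ∈ M satisfies J_T(u_T) ≤ J_T(v) for all v ∈ M. Then there exists a constant C > 0 depending only on α such that ‖u − u_T‖_a ≤ C ( inf_{v ∈ M} { ‖u − v‖_a + sup_{φ ∈ N, φ ≠ 0} |a(v,φ) − a_T(v,φ)| / ‖φ‖_a } + sup_{φ ∈ N, φ ≠ 0} |f(φ) − f_T(φ)| / ‖φ‖_a ), provided the indicated suprema are finite. -/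
/-- Theorem 4.2 (abstract form): first Strang-type lemma for the Ritz approximation over a
set `M` with numerically integrated forms `aT, fT`, with differences of elements of `M`
lying in `N` and discrete coercivity over `N`. -/
theorem stmt_3 {V : Type*} [AddCommGroup V] [Module ℝ V]
    (a aT : V →ₗ[ℝ] V →ₗ[ℝ] ℝ)
    (hsym : ∀ v w : V, a v w = a w v) (hTsym : ∀ v w : V, aT v w = aT w v)
    (hposdef : ∀ v : V, v ≠ 0 → 0 < a v v)
    (f fT : V →ₗ[ℝ] ℝ)
    (na : V → ℝ) (hna : ∀ v : V, na v = Real.sqrt (a v v))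
    (JT : V → ℝ) (hJT : ∀ v : V, JT v = (1 / 2) * aT v v - fT v)
    (M N : Set V) (hMN : M ⊆ N)
    (hdiff : ∀ u₁ ∈ M, ∀ u₂ ∈ M, u₁ - u₂ ∈ N)
    (α : ℝ) (hα : 0 < α)
    (hcoer : ∀ φ ∈ N, α * (na φ) ^ 2 ≤ aT φ φ)
    (u : V) (hu : ∀ w : V, a u w = f w)
    (uT : V) (huT : uT ∈ M) (hmin : ∀ v ∈ M, JT uT ≤ JT v)
    (E1 : V → ℝ)
    (hE1 : ∀ v : V, E1 v = sSup {x : ℝ | ∃ φ ∈ N, φ ≠ 0 ∧ x = |a v φ - aT v φ| / na φ})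
    (hE1bdd : ∀ v ∈ M, BddAbove {x : ℝ | ∃ φ ∈ N, φ ≠ 0 ∧ x = |a v φ - aT v φ| / na φ})
    (E2 : ℝ) (hE2 : E2 = sSup {x : ℝ | ∃ φ ∈ N, φ ≠ 0 ∧ x = |f φ - fT φ| / na φ})
    (hE2bdd : BddAbove {x : ℝ | ∃ φ ∈ N, φ ≠ 0 ∧ x = |f φ - fT φ| / na φ}) :
    ∃ C > 0, na (u - uT) ≤ C * (sInf ((fun v => na (u - v) + E1 v) '' M) + E2) := by
  -- basic facts about the energy norm
  have haself : ∀ w : V, 0 ≤ a w w := by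
    intro w
    by_cases h : w = 0
    · simp [h]
    · exact (hposdef w h).le
  have hna0 : ∀ w : V, 0 ≤ na w := fun w => (hna w) ▸ Real.sqrt_nonneg _
  have hnasq : ∀ w : V, na w ^ 2 = a w w := by
    intro w; rw [hna]; exact Real.sq_sqrt (haself w)
  have hnapos : ∀ w : V, w ≠ 0 → 0 < na w := by
    intro w hw; rw [hna]; exact Real.sqrt_pos.mpr (hposdef w hw)
  -- Cauchy–Schwarz for `a`
  have hCS : ∀ x y : V, |a x y| ≤ na x * na y := by
    intro x y
    have h : ∀ t : ℝ, 0 ≤ a y y * (t * t) + 2 * a x y * t + a x x := by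
      intro t
      have h0 := haself (x + t • y)
      have e : a (x + t • y) (x + t • y)
          = a y y * (t * t) + 2 * a x y * t + a x x := by
        simp only [map_add, map_smul, LinearMap.add_apply, LinearMap.smul_apply,
          smul_eq_mul]
        rw [hsym y x]; ring
      rw [e] at h0; exact h0
    have hd := discrim_le_zero (a := a y y) (b := 2 * a x y) (c := a x x) h
    rw [discrim] at hd
    have h1 : (a x y) ^ 2 ≤ (na x * na y) ^ 2 := by
      rw [mul_pow, hnasq, hnasq]; nlinarith
    have h2 := Real.sqrt_le_sqrt h1
    rwa [Real.sqrt_sq_eq_abs, Real.sqrt_sq (mul_nonneg (hna0 x) (hna0 y))] at h2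
  -- triangle inequality
  have htri : ∀ x y : V, na (x + y) ≤ na x + na y := by
    intro x y
    have h1 : a (x + y) (x + y) = a x x + 2 * a x y + a y y := by
      simp only [map_add, LinearMap.add_apply]
      rw [hsym y x]; ring
    have h2 : a (x + y) (x + y) ≤ (na x + na y) ^ 2 := by
      have hcs := (abs_le.mp (hCS x y)).2
      have := hnasq x; have := hnasq y
      nlinarith
    rw [hna]
    calc Real.sqrt (a (x + y) (x + y)) ≤ Real.sqrt ((na x + na y) ^ 2) :=
          Real.sqrt_le_sqrt h2
      _ = na x + na y := Real.sqrt_sq (add_nonneg (hna0 x) (hna0 y))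
  have hnaneg : ∀ w : V, na (-w) = na w := by
    intro w; rw [hna, hna]; simp
  -- nonnegativity of the consistency errors
  have hE1nn : ∀ v : V, 0 ≤ E1 v := by
    intro v
    rw [hE1]
    apply Real.sSup_nonneg
    rintro x ⟨φ, hφ, h0, rfl⟩
    exact div_nonneg (abs_nonneg _) (hna0 φ)
  have hE2nn : 0 ≤ E2 := by
    rw [hE2]
    apply Real.sSup_nonneg
    rintro x ⟨φ, hφ, h0, rfl⟩
    exact div_nonneg (abs_nonneg _) (hna0 φ)
  -- bounds from the suprema
  have hE1bd : ∀ v ∈ M, ∀ φ ∈ N, |a v φ - aT v φ| ≤ E1 v * na φ := by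
    intro v hv φ hφ
    by_cases h0 : φ = 0
    · simp [h0, hna]
    · have hle : |a v φ - aT v φ| / na φ ≤ E1 v := by
        rw [hE1]; exact le_csSup (hE1bdd v hv) ⟨φ, hφ, h0, rfl⟩
      have := (div_le_iff₀ (hnapos φ h0)).mp hle
      linarith
  have hE2bd : ∀ φ ∈ N, |f φ - fT φ| ≤ E2 * na φ := by
    intro φ hφ
    by_cases h0 : φ = 0
    · simp [h0, hna]
    · have hle : |f φ - fT φ| / na φ ≤ E2 := by
        rw [hE2]; exact le_csSup hE2bdd ⟨φ, hφ, h0, rfl⟩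
      have := (div_le_iff₀ (hnapos φ h0)).mp hle
      linarith
  -- key estimate for every v ∈ M
  have hkey : ∀ v ∈ M, α * na (u - uT) ≤ (α + 2) * (na (u - v) + E1 v + E2) := by
    intro v hv
    set φ : V := uT - v with hφdef
    have hφN : φ ∈ N := hdiff uT huT v hv
    have hE1v := hE1nn v
    by_cases h0 : φ = 0
    · have huv : uT = v := sub_eq_zero.mp h0
      rw [huv]
      have h1 : 0 ≤ na (u - v) := hna0 _
      nlinarith [mul_nonneg hα.le (add_nonneg hE1v hE2nn), h1, hα.le]
    · -- minimality gives: aT φ φ ≤ 2 * (fT φ - aT v φ)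
      have hmin' := hmin v hv
      have hexp : aT φ φ = aT uT uT - aT uT v - aT v uT + aT v v := by
        simp only [hφdef, map_sub, LinearMap.sub_apply]; ring
      have hfφ : fT φ = fT uT - fT v := by simp [hφdef]
      have havφ : aT v φ = aT v uT - aT v v := by simp [hφdef]
      have hkey1 : aT φ φ ≤ 2 * (fT φ - aT v φ) := by
        have h1 := hJT uT; have h2 := hJT v
        have hs := hTsym uT v
        rw [hexp, hfφ, havφ]
        linarith [hmin']
      have hcφ := hcoer φ hφN
      have hfφ' : f φ = a u φ := (hu φ).symm
      have hsplit : a u φ - a v φ = a (u - v) φ := by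
        simp [map_sub, LinearMap.sub_apply]
      have hcs := (abs_le.mp (hCS (u - v) φ)).2
      have hb1 := (abs_le.mp (hE1bd v hv φ hφN)).2
      have hb2 := (abs_le.mp (hE2bd φ hφN)).1
      have hbound : α * na φ ^ 2 ≤ 2 * (na (u - v) + E1 v + E2) * na φ := by
        nlinarith [hcφ, hkey1]
      have hp := hnapos φ h0
      have hS : α * na φ ≤ 2 * (na (u - v) + E1 v + E2) := by
        have h' : (α * na φ) * na φ ≤ (2 * (na (u - v) + E1 v + E2)) * na φ := by
          nlinarith
        exact le_of_mul_le_mul_right h' hp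
      have hsplit2 : u - uT = (u - v) + -φ := by
        rw [hφdef]; abel
      have htr : na (u - uT) ≤ na (u - v) + na φ := by
        rw [hsplit2]
        calc na ((u - v) + -φ) ≤ na (u - v) + na (-φ) := htri _ _
          _ = na (u - v) + na φ := by rw [hnaneg]
      have h4 := mul_le_mul_of_nonneg_left htr hα.le
      nlinarith [h4, hS, mul_nonneg hα.le (add_nonneg hE1v hE2nn)]
  have hα2 : (0:ℝ) < α + 2 := by linarith
  refine ⟨(α + 2) / α, by positivity, ?_⟩
  have hne : ((fun v => na (u - v) + E1 v) '' M).Nonempty := ⟨_, ⟨uT, huT, rfl⟩⟩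
  have hlb : α * na (u - uT) / (α + 2) - E2
      ≤ sInf ((fun v => na (u - v) + E1 v) '' M) := by
    apply le_csInf hne
    rintro x ⟨v, hv, rfl⟩
    show α * na (u - uT) / (α + 2) - E2 ≤ na (u - v) + E1 v
    have hk := hkey v hv
    rw [sub_le_iff_le_add, div_le_iff₀ hα2]
    nlinarith [hk]
  have h2 : α * na (u - uT)
      ≤ (sInf ((fun v => na (u - v) + E1 v) '' M) + E2) * (α + 2) := by
    rw [← div_le_iff₀ hα2]
    linarith
  rw [div_mul_eq_mul_div, le_div_iff₀ hα]
  nlinarith [h2]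
end

section
/- Let V be a real vector space, a : V × V → ℝ a symmetric bilinear form with a(v,v) ≥ 0, ‖v‖_a = √a(v,v), f : V → ℝ linear, a_T : V × V → ℝ a symmetric bilinear form, f_T : V → ℝ linear, and J_T(v) = ½ a_T(v,v) − f_T(v). Suppose u ∈ V satisfies a(u,w) = f(w) for all w ∈ V, and u_T, v ∈ V satisfy J_T(u_T) ≤ J_T(v), and there is α > 0 with α ‖u_T − v‖_a² ≤ a_T(u_T − v, u_T − v). Then (α/2) ‖u_T − v‖_a² ≤ ( f_T(u_T − v) − f(u_T − v) ) + ( a(v, u_T − v) − a_T(v, u_T − v) ) + a(u − v, u_T − v). -/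
/-- Key intermediate estimate in the proof of Theorem 4.2: the discrete energy distance
between the discrete Ritz minimizer `uT` and a competitor `v` is bounded by quadrature
consistency terms plus the approximation term `a(u - v, uT - v)`. -/
theorem stmt_4 {V : Type*} [AddCommGroup V] [Module ℝ V]
    (a aT : V →ₗ[ℝ] V →ₗ[ℝ] ℝ)
    (hsym : ∀ v w : V, a v w = a w v) (hTsym : ∀ v w : V, aT v w = aT w v)
    (hnonneg : ∀ v : V, 0 ≤ a v v)
    (f fT : V →ₗ[ℝ] ℝ)
    (na : V → ℝ) (hna : ∀ v : V, na v = Real.sqrt (a v v))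
    (JT : V → ℝ) (hJT : ∀ v : V, JT v = (1 / 2) * aT v v - fT v)
    (u : V) (hu : ∀ w : V, a u w = f w)
    (uT v : V) (hmin : JT uT ≤ JT v)
    (α : ℝ) (hα : 0 < α)
    (hcoer : α * (na (uT - v)) ^ 2 ≤ aT (uT - v) (uT - v)) :
    (α / 2) * (na (uT - v)) ^ 2 ≤
      (fT (uT - v) - f (uT - v)) + (a v (uT - v) - aT v (uT - v)) + a (u - v) (uT - v) := by
  have hexp : aT (uT - v) (uT - v) = aT uT uT - aT uT v - aT v uT + aT v v := by
    simp [map_sub, LinearMap.sub_apply]; ring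
  have hmin' := hmin
  rw [hJT, hJT] at hmin'
  have hfT : fT (uT - v) = fT uT - fT v := by simp
  have haTv : aT v (uT - v) = aT v uT - aT v v := by simp
  have hfeq : f (uT - v) = a u (uT - v) := (hu _).symm
  have hsub : a (u - v) (uT - v) = a u (uT - v) - a v (uT - v) := by
    simp [map_sub, LinearMap.sub_apply]; ring
  have hs := hTsym uT v
  linarith [hcoer]
end

section
/- Let A, c : ℝ → ℝ be continuous on [0,1] with A(x) > 0 and c(x) > 0 for all x ∈ [0,1], and let e, b : ℝ → ℝ be continuously differentiable on [0,1]. Then ∫₀¹ ( A(x) e′(x)² + c(x) e(x)² ) dx + ∫₀¹ ( b(x)²/A(x) + b′(x)²/c(x) ) dx = ∫₀¹ ( (b(x) + A(x) e′(x))²/A(x) + (b′(x) + c(x) e(x))²/c(x) ) dx − 2 ( b(1) e(1) − b(0) e(0) ). -/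
open Set intervalIntegral

/-- One-dimensional instance of identity (5.5): with primal error `e` and flux error `b`,
the sum of the squared energy norm and squared dual norm equals the squared least-squares
estimator minus twice the boundary term. -/
theorem stmt_6 (A c e b e' b' : ℝ → ℝ)
    (hA : ContinuousOn A (Icc 0 1)) (hc : ContinuousOn c (Icc 0 1))
    (hApos : ∀ x ∈ Icc (0 : ℝ) 1, 0 < A x)
    (hcpos : ∀ x ∈ Icc (0 : ℝ) 1, 0 < c x)
    (he : ∀ x ∈ Icc (0 : ℝ) 1, HasDerivWithinAt e (e' x) (Icc 0 1) x)
    (hb : ∀ x ∈ Icc (0 : ℝ) 1, HasDerivWithinAt b (b' x) (Icc 0 1) x)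
    (he' : ContinuousOn e' (Icc 0 1)) (hb' : ContinuousOn b' (Icc 0 1)) :
    (∫ x in (0 : ℝ)..1, (A x * (e' x) ^ 2 + c x * (e x) ^ 2)) +
      (∫ x in (0 : ℝ)..1, ((b x) ^ 2 / A x + (b' x) ^ 2 / c x)) =
    (∫ x in (0 : ℝ)..1, ((b x + A x * e' x) ^ 2 / A x + (b' x + c x * e x) ^ 2 / c x)) -
      2 * (b 1 * e 1 - b 0 * e 0) := by
  have h01 : (0 : ℝ) ≤ 1 := by norm_num
  have huIcc : uIcc (0 : ℝ) 1 = Icc 0 1 := uIcc_of_le h01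
  have hecont : ContinuousOn e (Icc 0 1) := fun x hx => (he x hx).continuousWithinAt
  have hbcont : ContinuousOn b (Icc 0 1) := fun x hx => (hb x hx).continuousWithinAt
  -- FTC for (b*e)' = b'*e + b*e'
  have hftc : (∫ x in (0:ℝ)..1, (b' x * e x + b x * e' x)) = b 1 * e 1 - b 0 * e 0 := by
    apply integral_eq_sub_of_hasDeriv_right_of_le (f := fun x => b x * e x)
      (f' := fun x => b' x * e x + b x * e' x) h01
    · exact hbcont.mul hecont
    · intro x hx
      have hx' : x ∈ Icc (0:ℝ) 1 := Ioo_subset_Icc_self hx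
      have hmem : Icc (0:ℝ) 1 ∈ nhds x := Icc_mem_nhds hx.1 hx.2
      exact (((hb x hx').hasDerivAt hmem).mul ((he x hx').hasDerivAt hmem)).hasDerivWithinAt
    · exact ((hb'.mul hecont).add (hbcont.mul he')).intervalIntegrable_of_Icc h01
  -- pointwise expansion of the estimator integrand
  have hcongr : (∫ x in (0:ℝ)..1, ((b x + A x * e' x) ^ 2 / A x + (b' x + c x * e x) ^ 2 / c x))
      = ∫ x in (0:ℝ)..1, ((A x * (e' x) ^ 2 + c x * (e x) ^ 2)
          + ((b x) ^ 2 / A x + (b' x) ^ 2 / c x)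
          + 2 * (b' x * e x + b x * e' x)) := by
    apply integral_congr
    intro x hx
    rw [huIcc] at hx
    have hA0 := (hApos x hx).ne'
    have hc0 := (hcpos x hx).ne'
    field_simp
    ring
  rw [hcongr]
  have i1 : IntervalIntegrable (fun x => A x * (e' x) ^ 2 + c x * (e x) ^ 2) MeasureTheory.volume 0 1 :=
    ((hA.mul (he'.pow 2)).add (hc.mul (hecont.pow 2))).intervalIntegrable_of_Icc h01
  have i2 : IntervalIntegrable (fun x => (b x) ^ 2 / A x + (b' x) ^ 2 / c x) MeasureTheory.volume 0 1 :=
    (((hbcont.pow 2).div hA (fun x hx => (hApos x hx).ne')).add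
      ((hb'.pow 2).div hc (fun x hx => (hcpos x hx).ne'))).intervalIntegrable_of_Icc h01
  have i3 : IntervalIntegrable (fun x => 2 * (b' x * e x + b x * e' x)) MeasureTheory.volume 0 1 :=
    ((continuousOn_const.mul ((hb'.mul hecont).add (hbcont.mul he')))).intervalIntegrable_of_Icc h01
  rw [integral_add (i1.add i2) i3, integral_add i1 i2, integral_const_mul, hftc]
  ring
end
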